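/- Consider the Big-Match game of type I with player 1's quitting action T* and non-quitting action B, player 2's non-quitting actions {L,R}, and scalar payoffs g(T*,L) = 1, g(T*,R) = 0, g(B,L) = 0, g(B,R) = −1. For every strategy σ of player 1, there exists a strategy τ of player 2 such that liminf_{T→∞} | E_{σ,τ}[(1/T) Σ_{t=1}^T g(i_t,j_t)] | ≥ 1/10. Consequently, the set {0} is not uniformly approachable by player 1 in this game. -/
import Mathlib

noncomputable section

namespace Example4

/-- Payoffs of the Big-Match game of type I: `T*` (quitting) and `B` (non-quitting) for
player 1; `L` and `R` (both non-quitting) for player 2, with `true` = `L`.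
`g(T*,L) = 1, g(T*,R) = 0, g(B,L) = 0, g(B,R) = −1`. -/
def g : Bool → Bool → ℝ := fun i j =>
  if i then (if j then 1 else 0) else (if j then 0 else -1)

/-- A behavioral strategy assigns a probability (of `T*` for player 1, of `L` for
player 2) to each unabsorbed history, recorded as the list of player 2's realized
actions (player 1 having played `B` so far). -/
def ValidStrat (σ : List Bool → ℝ) : Prop := ∀ h, σ h ∈ Set.Icc (0 : ℝ) 1

/-- Expected sum of the payoffs of the next `n` stages from the unabsorbed history `h`:
with probability `σ h` player 1 quits and the payoff `g(T*,j)` is frozen forever. -/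
def expTotal (σ τ : List Bool → ℝ) : ℕ → List Bool → ℝ
  | 0, _ => 0
  | n + 1, h =>
      σ h * (((n : ℝ) + 1) * (τ h * g true true + (1 - τ h) * g true false))
        + (1 - σ h) * (τ h * (g false true + expTotal σ τ n (h ++ [true]))
            + (1 - τ h) * (g false false + expTotal σ τ n (h ++ [false])))

/-- Expected average payoff over the first `T` stages,
`E_{σ,τ}[(1/T) Σ_{t=1}^T g(i_t,j_t)]`. -/
def avg (σ τ : List Bool → ℝ) (T : ℕ) : ℝ := (T : ℝ)⁻¹ * expTotal σ τ T []

/-! ### Auxiliary development -/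

lemma g_tt : g true true = 1 := rfl
lemma g_tf : g true false = 0 := rfl
lemma g_ft : g false true = 0 := rfl
lemma g_ff : g false false = -1 := rfl

/-- Probability that player 1 quits within the next `n` stages when player 2 plays
fair coins, starting from history `h`. -/
def Q (σ : List Bool → ℝ) : ℕ → List Bool → ℝ
  | 0, _ => 0
  | n + 1, h => σ h + (1 - σ h) * ((Q σ n (h ++ [true]) + Q σ n (h ++ [false])) / 2)

lemma Q_nonneg {σ : List Bool → ℝ} (hσ : ValidStrat σ) : ∀ (n : ℕ) (h : List Bool), 0 ≤ Q σ n h := by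
  intro n
  induction n with
  | zero => intro h; simp [Q]
  | succ n ih =>
    intro h
    have h1 := ih (h ++ [true])
    have h2 := ih (h ++ [false])
    have hs := hσ h
    simp only [Set.mem_Icc] at hs
    simp only [Q]
    nlinarith [hs.1, hs.2]

/-- The fair-coin strategy of player 2. -/
def half : List Bool → ℝ := fun _ => 1 / 2

lemma half_valid : ValidStrat half := by
  intro h; simp only [half, Set.mem_Icc]; norm_num

/-- The strategy of player 2: fair coins for `n₀` stages, then `L` forever. -/
def switch (n₀ : ℕ) : List Bool → ℝ := fun h => if h.length < n₀ then 1 / 2 else 1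

lemma switch_valid (n₀ : ℕ) : ValidStrat (switch n₀) := by
  intro h; simp only [switch, Set.mem_Icc]
  split <;> norm_num

/-- Expected totals are bounded by the number of stages. -/
lemma abs_expTotal_le {σ τ : List Bool → ℝ} (hσ : ValidStrat σ) (hτ : ValidStrat τ) :
    ∀ (n : ℕ) (h : List Bool), |expTotal σ τ n h| ≤ (n : ℝ) := by
  intro n
  induction n with
  | zero => intro h; simp [expTotal]
  | succ n ih =>
    intro h
    have h1 := abs_le.1 (ih (h ++ [true]))
    have h2 := abs_le.1 (ih (h ++ [false]))
    have hs := hσ h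
    have ht := hτ h
    simp only [Set.mem_Icc] at hs ht
    set ET := expTotal σ τ n (h ++ [true]) with hET
    set EF := expTotal σ τ n (h ++ [false]) with hEF
    have hτ0 : (0:ℝ) ≤ τ h := ht.1
    have hτ1 : (0:ℝ) ≤ 1 - τ h := by linarith [ht.2]
    have hσ0 : (0:ℝ) ≤ σ h := hs.1
    have hσ1 : (0:ℝ) ≤ 1 - σ h := by linarith [hs.2]
    have hInnerUB : τ h * (0 + ET) + (1 - τ h) * (-1 + EF) ≤ (n : ℝ) := by
      have a1 : τ h * ET ≤ τ h * (n : ℝ) := mul_le_mul_of_nonneg_left h1.2 hτ0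
      have a2 : (1 - τ h) * (-1 + EF) ≤ (1 - τ h) * (n : ℝ) :=
        mul_le_mul_of_nonneg_left (by linarith [h2.2]) hτ1
      nlinarith
    have hInnerLB : -((n : ℝ) + 1) ≤ τ h * (0 + ET) + (1 - τ h) * (-1 + EF) := by
      have a1 : τ h * (-(n : ℝ)) ≤ τ h * ET := mul_le_mul_of_nonneg_left h1.1 hτ0
      have a2 : (1 - τ h) * (-(n : ℝ) - 1) ≤ (1 - τ h) * (-1 + EF) :=
        mul_le_mul_of_nonneg_left (by linarith [h2.1]) hτ1
      nlinarith
    rw [abs_le]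
    simp only [expTotal, g_tt, g_tf, g_ft, g_ff]
    push_cast
    constructor
    · have b1 : (0:ℝ) ≤ σ h * (((n:ℝ) + 1) * (τ h * 1 + (1 - τ h) * 0)) := by positivity
      have b2 : (1 - σ h) * (-((n : ℝ) + 1))
          ≤ (1 - σ h) * (τ h * (0 + ET) + (1 - τ h) * (-1 + EF)) :=
        mul_le_mul_of_nonneg_left hInnerLB hσ1
      nlinarith
    · have b1 : σ h * (((n:ℝ) + 1) * (τ h * 1 + (1 - τ h) * 0)) ≤ σ h * ((n:ℝ) + 1) := by
        have : ((n:ℝ) + 1) * (τ h * 1 + (1 - τ h) * 0) ≤ ((n:ℝ) + 1) * 1 := by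
          apply mul_le_mul_of_nonneg_left (by linarith [ht.2]) (by positivity)
        nlinarith
      have b2 : (1 - σ h) * (τ h * (0 + ET) + (1 - τ h) * (-1 + EF))
          ≤ (1 - σ h) * (n : ℝ) := mul_le_mul_of_nonneg_left hInnerUB hσ1
      nlinarith

lemma abs_avg_le_one {σ τ : List Bool → ℝ} (hσ : ValidStrat σ) (hτ : ValidStrat τ)
    (T : ℕ) : |avg σ τ T| ≤ 1 := by
  rcases Nat.eq_zero_or_pos T with hT | hT
  · subst hT; simp [avg, expTotal]
  · have hT0 : (0 : ℝ) < T := by exact_mod_cast hT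
    have hb := abs_expTotal_le hσ hτ T []
    rw [avg, abs_mul, abs_inv, abs_of_pos hT0]
    rw [inv_mul_le_iff₀ hT0]
    simpa using hb

/-- Upper bound for the fair-coin strategy:
`expTotal σ half n h ≤ (n+1) Q n h − n/2`. -/
lemma expTotal_half_le {σ : List Bool → ℝ} (hσ : ValidStrat σ) :
    ∀ (n : ℕ) (h : List Bool),
      expTotal σ half n h ≤ ((n : ℝ) + 1) * Q σ n h - (n : ℝ) / 2 := by
  intro n
  induction n with
  | zero => intro h; simp [expTotal, Q]
  | succ n ih =>
    intro h
    have h1 := ih (h ++ [true])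
    have h2 := ih (h ++ [false])
    have hs := hσ h
    simp only [Set.mem_Icc] at hs
    have hq1 := Q_nonneg hσ n (h ++ [true])
    have hq2 := Q_nonneg hσ n (h ++ [false])
    simp only [expTotal, Q, half, g_tt, g_tf, g_ft, g_ff]
    push_cast
    nlinarith [hs.1, hs.2, hq1, hq2,
      mul_le_mul_of_nonneg_left h1 (by linarith [hs.2] : (0:ℝ) ≤ 1 - σ h),
      mul_le_mul_of_nonneg_left h2 (by linarith [hs.2] : (0:ℝ) ≤ 1 - σ h),
      mul_nonneg (by linarith [hs.2] : (0:ℝ) ≤ 1 - σ h) hq1,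
      mul_nonneg (by linarith [hs.2] : (0:ℝ) ≤ 1 - σ h) hq2]

/-- After the switch to all-`L`, the expected total is nonnegative. -/
lemma expTotal_switch_nonneg {σ : List Bool → ℝ} (hσ : ValidStrat σ) (n₀ : ℕ) :
    ∀ (m : ℕ) (h : List Bool), n₀ ≤ h.length → 0 ≤ expTotal σ (switch n₀) m h := by
  intro m
  induction m with
  | zero => intro h _; simp [expTotal]
  | succ m ih =>
    intro h hh
    have hcond : ¬ h.length < n₀ := by omega
    have h1 := ih (h ++ [true]) (by simp; omega)
    have hs := hσ h
    simp only [Set.mem_Icc] at hs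
    simp only [expTotal, switch, if_neg hcond, g_tt, g_tf, g_ft, g_ff]
    have hm : (0:ℝ) ≤ (m : ℝ) + 1 := by positivity
    nlinarith [hs.1, hs.2]

/-- Lower bound before the switch:
`expTotal σ (switch n₀) m h ≥ Q k h (m−k)/2 − k/2` when `h.length + k = n₀`. -/
lemma expTotal_switch_ge {σ : List Bool → ℝ} (hσ : ValidStrat σ) (n₀ : ℕ) :
    ∀ (m k : ℕ) (h : List Bool), h.length + k = n₀ →
      Q σ k h * (((m : ℝ) - (k : ℝ)) / 2) - (k : ℝ) / 2
        ≤ expTotal σ (switch n₀) m h := by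
  intro m
  induction m with
  | zero =>
    intro k h hk
    have hq := Q_nonneg hσ k h
    have hk0 : (0:ℝ) ≤ (k : ℝ) := by positivity
    simp only [expTotal, Nat.cast_zero]
    nlinarith
  | succ m ih =>
    intro k h hk
    match k with
    | 0 =>
      have h0 := expTotal_switch_nonneg hσ n₀ (m + 1) h (by omega)
      simpa [Q] using h0
    | k' + 1 =>
      have hcond : h.length < n₀ := by omega
      have h1 := ih k' (h ++ [true]) (by simp; omega)
      have h2 := ih k' (h ++ [false]) (by simp; omega)
      have hs := hσ h
      simp only [Set.mem_Icc] at hs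
      have hq1 := Q_nonneg hσ k' (h ++ [true])
      have hq2 := Q_nonneg hσ k' (h ++ [false])
      simp only [expTotal, Q, switch, if_pos hcond, g_tt, g_tf, g_ft, g_ff]
      push_cast
      nlinarith [hs.1, hs.2, hq1, hq2,
        mul_le_mul_of_nonneg_left h1 (by linarith [hs.2] : (0:ℝ) ≤ 1 - σ h),
        mul_le_mul_of_nonneg_left h2 (by linarith [hs.2] : (0:ℝ) ≤ 1 - σ h),
        mul_nonneg hs.1 (by positivity : (0:ℝ) ≤ (k' : ℝ) + 1),
        mul_nonneg (by linarith [hs.2] : (0:ℝ) ≤ 1 - σ h) hq1,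
        mul_nonneg (by linarith [hs.2] : (0:ℝ) ≤ 1 - σ h) hq2]

/-- A liminf lower bound from an eventual bound of the form `c - d / T`. -/
lemma le_liminf_aux (f : ℕ → ℝ) (c d : ℝ) (hbd : ∀ T, f T ≤ 1)
    (h : ∀ᶠ T : ℕ in Filter.atTop, c - d / (T : ℝ) ≤ f T) :
    c ≤ Filter.liminf f Filter.atTop := by
  have h0 : Filter.Tendsto (fun T : ℕ => d / (T : ℝ)) Filter.atTop (nhds 0) :=
    tendsto_const_div_atTop_nhds_zero_nat d
  have ht : Filter.Tendsto (fun T : ℕ => c - d / (T : ℝ)) Filter.atTop (nhds c) := by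
    simpa using (tendsto_const_nhds : Filter.Tendsto (fun _ : ℕ => c)
      Filter.atTop (nhds c)).sub h0
  have h1 : Filter.liminf (fun T : ℕ => c - d / (T : ℝ)) Filter.atTop = c :=
    ht.liminf_eq
  have h2 : Filter.liminf (fun T : ℕ => c - d / (T : ℝ)) Filter.atTop
      ≤ Filter.liminf f Filter.atTop := by
    refine Filter.liminf_le_liminf h ht.isBoundedUnder_ge ?_
    exact Filter.isCoboundedUnder_ge_of_eventually_le Filter.atTop
      (Filter.Eventually.of_forall hbd)
  linarith [h1 ▸ h2]

/-- for every strategy `σ` of player 1 there is a strategy `τ` of player 2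
with `liminf_{T→∞} |E_{σ,τ}[(1/T)Σ_{t=1}^T g(i_t,j_t)]| ≥ 1/10`; consequently `{0}` is
not uniformly approachable by player 1. -/
theorem zero_not_uniformly_approachable :
    (∀ σ : List Bool → ℝ, ValidStrat σ →
      ∃ τ : List Bool → ℝ, ValidStrat τ ∧
        (1:ℝ)/10 ≤ Filter.liminf (fun T : ℕ => |avg σ τ T|) Filter.atTop) ∧
    ¬ (∀ ε > (0:ℝ), ∃ σ : List Bool → ℝ, ValidStrat σ ∧ ∃ T₀ : ℕ, ∀ T ≥ T₀,
        ∀ τ : List Bool → ℝ, ValidStrat τ → |avg σ τ T| ≤ ε) := by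
  have main : ∀ σ : List Bool → ℝ, ValidStrat σ →
      ∃ τ : List Bool → ℝ, ValidStrat τ ∧
        (1:ℝ)/10 ≤ Filter.liminf (fun T : ℕ => |avg σ τ T|) Filter.atTop := by
    intro σ hσ
    by_cases hc : ∀ n, Q σ n [] ≤ 2/5
    · -- player 2 plays fair coins forever
      refine ⟨half, half_valid, ?_⟩
      refine le_liminf_aux _ (1/10) 1 (fun T => abs_avg_le_one hσ half_valid T) ?_
      rw [Filter.eventually_atTop]
      refine ⟨1, fun T hT => ?_⟩
      have hT0 : (0 : ℝ) < T := by exact_mod_cast hT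
      have hE := expTotal_half_le hσ T []
      have hQ := hc T
      have hQ0 := Q_nonneg hσ T []
      have h1 : expTotal σ half T [] ≤ ((T : ℝ) + 1) * (2/5) - (T : ℝ)/2 := by
        nlinarith
      have havg : avg σ half T ≤ -1/10 + 2/(5 * (T : ℝ)) := by
        rw [avg]
        calc (T : ℝ)⁻¹ * expTotal σ half T []
            ≤ (T : ℝ)⁻¹ * (((T : ℝ) + 1) * (2/5) - (T : ℝ)/2) :=
              mul_le_mul_of_nonneg_left h1 (by positivity)
          _ = -1/10 + 2/(5 * (T : ℝ)) := by field_simp; ring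
      have h25 : 2/(5 * (T : ℝ)) ≤ 1/(T : ℝ) := by
        rw [div_le_div_iff₀ (by positivity) hT0]; nlinarith
      have hlb : (1:ℝ)/10 - 1/(T : ℝ) ≤ -(avg σ half T) := by linarith
      calc (1:ℝ)/10 - 1/(T : ℝ) ≤ -(avg σ half T) := hlb
        _ ≤ |avg σ half T| := neg_le_abs _
    · -- some finite horizon captures quitting mass > 2/5
      push_neg at hc
      obtain ⟨n₀, hn₀⟩ := hc
      refine ⟨switch n₀, switch_valid n₀, ?_⟩
      have key : (1:ℝ)/5 ≤ Filter.liminf (fun T : ℕ => |avg σ (switch n₀) T|)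
          Filter.atTop := by
        refine le_liminf_aux _ (1/5) n₀ (fun T => abs_avg_le_one hσ (switch_valid n₀) T) ?_
        rw [Filter.eventually_atTop]
        refine ⟨n₀ + 1, fun T hT => ?_⟩
        have hT0 : (0 : ℝ) < T := by exact_mod_cast (show 0 < T by omega)
        have hTn : (n₀ : ℝ) ≤ (T : ℝ) := by exact_mod_cast (show n₀ ≤ T by omega)
        have hn0 : (0:ℝ) ≤ (n₀ : ℝ) := by positivity
        have hE := expTotal_switch_ge hσ n₀ T n₀ [] (by simp)
        have hQ1 := Q_nonneg hσ n₀ []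
        have h1 : (2/5 : ℝ) * (((T : ℝ) - n₀)/2) - (n₀ : ℝ)/2
            ≤ expTotal σ (switch n₀) T [] := by
          have hmul : (2/5 : ℝ) * (((T : ℝ) - n₀)/2) ≤ Q σ n₀ [] * (((T : ℝ) - n₀)/2) :=
            mul_le_mul_of_nonneg_right (le_of_lt hn₀) (by linarith)
          linarith
        have h3 : (1:ℝ)/5 - (n₀ : ℝ)/(T : ℝ)
            ≤ (T : ℝ)⁻¹ * ((2/5 : ℝ) * (((T : ℝ) - n₀)/2) - (n₀ : ℝ)/2) := by
          rw [inv_mul_eq_div, le_div_iff₀ hT0]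
          have hexp : ((1:ℝ)/5 - (n₀ : ℝ)/(T : ℝ)) * (T : ℝ) = (T : ℝ)/5 - n₀ := by
            field_simp
          rw [hexp]
          linarith
        have havg : (1:ℝ)/5 - (n₀ : ℝ)/(T : ℝ) ≤ avg σ (switch n₀) T := by
          rw [avg]
          have h2 : (T : ℝ)⁻¹ * ((2/5 : ℝ) * (((T : ℝ) - n₀)/2) - (n₀ : ℝ)/2)
              ≤ (T : ℝ)⁻¹ * expTotal σ (switch n₀) T [] :=
            mul_le_mul_of_nonneg_left h1 (by positivity)
          linarith
        calc (1:ℝ)/5 - (n₀ : ℝ)/(T : ℝ) ≤ avg σ (switch n₀) T := havg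
          _ ≤ |avg σ (switch n₀) T| := le_abs_self _
      linarith
  refine ⟨main, ?_⟩
  intro H
  obtain ⟨σ, hσ, T₀, hT₀⟩ := H (1/20) (by norm_num)
  obtain ⟨τ, hτ, hlim⟩ := main σ hσ
  have hub : Filter.liminf (fun T : ℕ => |avg σ τ T|) Filter.atTop ≤ 1/20 := by
    apply Filter.liminf_le_of_frequently_le
    · refine Filter.Eventually.frequently ?_
      rw [Filter.eventually_atTop]
      exact ⟨T₀, fun T hT => hT₀ T hT τ hτ⟩
    · exact Filter.isBoundedUnder_of ⟨0, fun T => abs_nonneg _⟩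
  linarith

end Example4

end
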